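/- Let n ≥ 1, s ∈ (0,1), and let K be a kernel with λ|z|^{−n−2s} ≤ K(z) ≤ Λ|z|^{−n−2s}. Let u : ℝⁿ → ℝ, let M ∈ ℝ with sup_{ℝⁿ} u < M, and define w := −log(M − u). Let x ∈ ℝⁿ be a point where u is differentiable, and assume that the integrands defining Lu(x) and Lw(x) are both Lebesgue integrable on ℝⁿ. Then Lw(x) ≥ Lu(x) / (M − u(x)). -/

import Mathlib

/-!
Since `-log` is convex, `-log (M - t)` lies above its tangent line at `t = u x`, whose slope is
`(M - u x)⁻¹`; the gradient of `w` is `∇u(x) / (M - u x)`, so the gradient terms cancel and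
`LIntegrand K w x z - LIntegrand K u x z / (M - u x)` is this convexity gap times `K z ≥ 0`.
Integrating gives the inequality.
-/

open MeasureTheory Filter
open scoped RealInnerProductSpace

noncomputable section

/-- The integrand of the integro-differential operator `L` at base point `x`. -/
def LIntegrand {n : ℕ} (K u : EuclideanSpace ℝ (Fin n) → ℝ)
    (x z : EuclideanSpace ℝ (Fin n)) : ℝ :=
  (u (x + z) - u x - (if ‖z‖ ≤ 1 then ⟪gradient u x, z⟫ else 0)) * K z

/-- The symmetric translation-invariant integro-differential operator `L`. -/
def Lop {n : ℕ} (K u : EuclideanSpace ℝ (Fin n) → ℝ)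
    (x : EuclideanSpace ℝ (Fin n)) : ℝ :=
  ∫ z, LIntegrand K u x z

/-- A symmetric measurable kernel with two-sided fractional bounds of order `2s`. -/
def IsKernel (n : ℕ) (s lam Lam : ℝ) (K : EuclideanSpace ℝ (Fin n) → ℝ) : Prop :=
  Measurable K ∧
  (∀ z : EuclideanSpace ℝ (Fin n), z ≠ 0 → K (-z) = K z) ∧
  (∀ z : EuclideanSpace ℝ (Fin n), z ≠ 0 →
    lam * ‖z‖ ^ (-(n : ℝ) - 2 * s) ≤ K z ∧ K z ≤ Lam * ‖z‖ ^ (-(n : ℝ) - 2 * s))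

theorem hasDerivAt_neg_log_const_sub {M t : ℝ} (ht : t < M) :
    HasDerivAt (fun t => -Real.log (M - t)) (M - t)⁻¹ t := by
  have h := (((hasDerivAt_id' t).const_sub M).log (sub_ne_zero.mpr ht.ne')).fun_neg
  simpa [neg_div] using h

section Gradient

variable {F : Type*} [NormedAddCommGroup F] [InnerProductSpace ℝ F] [CompleteSpace F]

theorem HasDerivAt.comp_hasGradientAt {f : ℝ → ℝ} {f' : ℝ} {u : F → ℝ} {g x : F}
    (hf : HasDerivAt f f' (u x)) (hu : HasGradientAt u g x) :
    HasGradientAt (f ∘ u) (f' • g) x := by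
  rw [hasGradientAt_iff_hasFDerivAt] at hu ⊢
  simpa [map_smul] using hf.comp_hasFDerivAt x hu

theorem gradient_neg_log_const_sub {u : F → ℝ} {x : F} {M : ℝ}
    (hu : DifferentiableAt ℝ u x) (hx : u x < M) :
    gradient (fun y => -Real.log (M - u y)) x = (M - u x)⁻¹ • gradient u x :=
  ((hasDerivAt_neg_log_const_sub hx).comp_hasGradientAt hu.hasGradientAt).gradient

end Gradient

theorem Real.sub_div_le_log_sub_log {a b : ℝ} (ha : 0 < a) (hb : 0 < b) :
    (a - b) / a ≤ Real.log a - Real.log b := by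
  have h := Real.one_sub_inv_le_log_of_pos (div_pos ha hb)
  rwa [Real.log_div ha.ne' hb.ne', inv_div, one_sub_div ha.ne'] at h

theorem IsKernel.nonneg {n : ℕ} {s lam Lam : ℝ} {K : EuclideanSpace ℝ (Fin n) → ℝ}
    (hK : IsKernel n s lam Lam K) (hlam : 0 ≤ lam) {z : EuclideanSpace ℝ (Fin n)}
    (hz : z ≠ 0) : 0 ≤ K z :=
  le_trans (by positivity) (hK.2.2 z hz).1

theorem LIntegrand_div_le_LIntegrand_neg_log {n : ℕ} {K u : EuclideanSpace ℝ (Fin n) → ℝ}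
    {M : ℝ} {x : EuclideanSpace ℝ (Fin n)} (hK : ∀ z, z ≠ 0 → 0 ≤ K z) (hu : ∀ y, u y < M)
    (hgrad : gradient (fun y => -Real.log (M - u y)) x = (M - u x)⁻¹ • gradient u x)
    (z : EuclideanSpace ℝ (Fin n)) :
    LIntegrand K u x z / (M - u x) ≤ LIntegrand K (fun y => -Real.log (M - u y)) x z := by
  set a := M - u x
  set b := M - u (x + z)
  have gap : LIntegrand K (fun y => -Real.log (M - u y)) x z - LIntegrand K u x z / a
      = (Real.log a - Real.log b - (a - b) / a) * K z := by
    simp only [LIntegrand, hgrad, real_inner_smul_left, a, b]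
    split_ifs <;> ring
  have gap_nonneg : 0 ≤ (Real.log a - Real.log b - (a - b) / a) * K z := by
    rcases eq_or_ne z 0 with rfl | hz
    · simp [b, a]
    · exact mul_nonneg
        (sub_nonneg.mpr (Real.sub_div_le_log_sub_log (sub_pos.mpr (hu x)) (sub_pos.mpr (hu _))))
        (hK z hz)
  linarith

theorem bernstein_operator_inequality_general
    (n : ℕ) (s lam Lam : ℝ)
    (hlam : 0 < lam)
    (K u : EuclideanSpace ℝ (Fin n) → ℝ) (hK : IsKernel n s lam Lam K)
    (M : ℝ) (hM : ∃ M₀ : ℝ, M₀ < M ∧ ∀ y, u y ≤ M₀)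
    (w : EuclideanSpace ℝ (Fin n) → ℝ)
    (hw : w = fun y => -Real.log (M - u y))
    (x : EuclideanSpace ℝ (Fin n)) (hux : DifferentiableAt ℝ u x)
    (hIu : Integrable (LIntegrand K u x))
    (hIw : Integrable (LIntegrand K w x)) :
    Lop K w x ≥ Lop K u x / (M - u x) := by
  subst hw
  obtain ⟨M₀, hM₀, hub⟩ := hM
  have hu : ∀ y, u y < M := fun y => (hub y).trans_lt hM₀
  have pointwise := LIntegrand_div_le_LIntegrand_neg_log (fun z hz => hK.nonneg hlam.le hz) hu
    (gradient_neg_log_const_sub hux (hu x))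
  calc Lop K u x / (M - u x) = ∫ z, LIntegrand K u x z / (M - u x) := (integral_div _ _).symm
    _ ≤ _ := integral_mono (hIu.div_const _) hIw pointwise

/-- **Bernstein transform comparison for `L`.**  If `sup u < M`,
`w := −log(M − u)`, `u` is differentiable at `x`, and the integrands defining
`Lu(x)` and `Lw(x)` are Lebesgue integrable, then `Lw(x) ≥ Lu(x)/(M − u(x))`. -/
theorem bernstein_operator_inequality
    (n : ℕ) (hn : 1 ≤ n) (s lam Lam : ℝ)
    (hs0 : 0 < s) (hs1 : s < 1) (hlam : 0 < lam) (hlamLam : lam ≤ Lam)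
    (K u : EuclideanSpace ℝ (Fin n) → ℝ) (hK : IsKernel n s lam Lam K)
    (M : ℝ) (hM : ∃ M₀ : ℝ, M₀ < M ∧ ∀ y, u y ≤ M₀)
    (w : EuclideanSpace ℝ (Fin n) → ℝ)
    (hw : w = fun y => -Real.log (M - u y))
    (x : EuclideanSpace ℝ (Fin n)) (hux : DifferentiableAt ℝ u x)
    (hIu : Integrable (LIntegrand K u x))
    (hIw : Integrable (LIntegrand K w x)) :
    Lop K w x ≥ Lop K u x / (M - u x) :=
  bernstein_operator_inequality_general n s lam Lam hlam K u hK M hM w hw x hux hIu hIw
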